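/- arXiv:2504.20165 — 2 statements merged into one kernel-verified Lean document; each statement's English description precedes it below -/
import Mathlib

section
/- Let s be a finite set and let P be a partition of s into nonempty, pairwise disjoint parts whose union is s. If the cardinality of s exceeds the number of parts of P by exactly 2, then exactly one of the following holds: (i) P has exactly one part of cardinality 3 and every other part is a singleton, or (ii) P has exactly two (distinct) parts of cardinality 2 and every other part is a singleton. -/
/-- If a partition of a finite set `s` has exactly two fewer parts than `s` has
elements, then exactly one of the following holds: it has exactly one part of
cardinality 3 with all other parts singletons, or it has exactly two distinct
parts of cardinality 2 with all other parts singletons. -/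
theorem finpartition_card_eq_parts_add_two
    {α : Type*} [DecidableEq α] (s : Finset α) (P : Finpartition s)
    (h : s.card = P.parts.card + 2) :
    Xor'
      (∃ t ∈ P.parts, t.card = 3 ∧ ∀ u ∈ P.parts, u ≠ t → u.card = 1)
      (∃ t₁ ∈ P.parts, ∃ t₂ ∈ P.parts, t₁ ≠ t₂ ∧ t₁.card = 2 ∧ t₂.card = 2 ∧
        ∀ u ∈ P.parts, u ≠ t₁ → u ≠ t₂ → u.card = 1) := by
  have hpos : ∀ t ∈ P.parts, 1 ≤ t.card := fun t ht =>
    Finset.card_pos.mpr (P.nonempty_of_mem_parts ht)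
  have hsum : ∑ t ∈ P.parts, t.card = s.card := P.sum_card_parts
  have hsum2 : ∑ t ∈ P.parts, (t.card - 1) = 2 := by
    have : ∑ t ∈ P.parts, (t.card - 1) + ∑ t ∈ P.parts, 1 =
        ∑ t ∈ P.parts, t.card := by
      rw [← Finset.sum_add_distrib]
      exact Finset.sum_congr rfl fun t ht => Nat.sub_add_cancel (hpos t ht)
    simp only [Finset.sum_const, smul_eq_mul, mul_one] at this
    omega
  set B := P.parts.filter (fun t => 2 ≤ t.card) with hB
  have hBsum : ∑ t ∈ B, (t.card - 1) = 2 := by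
    rw [hB, Finset.sum_filter_of_ne, hsum2]
    intro t ht hne
    have := hpos t ht
    omega
  have hBsub : ∀ t ∈ B, t ∈ P.parts := fun t ht => (Finset.mem_filter.mp ht).1
  have hBone : ∀ t ∈ B, 1 ≤ t.card - 1 := by
    intro t ht
    have := (Finset.mem_filter.mp ht).2
    omega
  have hsmall : ∀ u ∈ P.parts, u ∉ B → u.card = 1 := by
    intro u hu hub
    have := hpos u hu
    have : ¬ 2 ≤ u.card := fun h2 => hub (Finset.mem_filter.mpr ⟨hu, h2⟩)
    omega
  have hBcard : B.card ≤ 2 := by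
    calc B.card = ∑ _t ∈ B, 1 := by simp
    _ ≤ ∑ t ∈ B, (t.card - 1) := Finset.sum_le_sum hBone
    _ = 2 := hBsum
  have hBne : B.Nonempty := by
    rcases Finset.eq_empty_or_nonempty B with he | hne
    · rw [he] at hBsum; simp at hBsum
    · exact hne
  interval_cases hc : B.card
  · exact absurd (Finset.card_eq_zero.mp hc) hBne.ne_empty
  · -- one part of card 3
    obtain ⟨t, ht⟩ := Finset.card_eq_one.mp hc
    have htB : t ∈ B := by rw [ht]; exact Finset.mem_singleton_self t
    have ht3 : t.card = 3 := by
      have : ∑ u ∈ B, (u.card - 1) = t.card - 1 := by rw [ht, Finset.sum_singleton]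
      have h2 := (Finset.mem_filter.mp htB).2
      omega
    refine Or.inl ⟨⟨t, hBsub t htB, ht3, fun u hu hut => hsmall u hu ?_⟩, ?_⟩
    · rw [ht]; simpa using hut
    · rintro ⟨t₁, h₁, t₂, h₂, hne, hc₁, hc₂, _⟩
      have : t₁ ≠ t ∨ t₂ ≠ t := by
        by_contra hcon; push_neg at hcon; exact hne (hcon.1.trans hcon.2.symm)
      rcases this with hne' | hne'
      · have := hsmall t₁ h₁ (by rw [ht]; simpa using hne'); omega
      · have := hsmall t₂ h₂ (by rw [ht]; simpa using hne'); omega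
  · -- two parts of card 2
    obtain ⟨t₁, t₂, hne, ht⟩ := Finset.card_eq_two.mp hc
    have h₁B : t₁ ∈ B := by rw [ht]; simp
    have h₂B : t₂ ∈ B := by rw [ht]; simp
    have hsum12 : (t₁.card - 1) + (t₂.card - 1) = 2 := by
      have : ∑ u ∈ B, (u.card - 1) = (t₁.card - 1) + (t₂.card - 1) := by
        rw [ht, Finset.sum_pair hne]
      omega
    have hc₁ : t₁.card = 2 := by
      have a := (Finset.mem_filter.mp h₁B).2
      have b := (Finset.mem_filter.mp h₂B).2
      omega
    have hc₂ : t₂.card = 2 := by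
      have a := (Finset.mem_filter.mp h₁B).2
      have b := (Finset.mem_filter.mp h₂B).2
      omega
    refine Or.inr ⟨⟨t₁, hBsub t₁ h₁B, t₂, hBsub t₂ h₂B, hne, hc₁, hc₂,
      fun u hu hu₁ hu₂ => hsmall u hu ?_⟩, ?_⟩
    · rw [ht]; simp [hu₁, hu₂]
    · rintro ⟨t, htp, ht3, hrest⟩
      have : t₁ ≠ t ∨ t₂ ≠ t := by
        by_contra hcon; push_neg at hcon; exact hne (hcon.1.trans hcon.2.symm)
      rcases this with hne' | hne'
      · have := hrest t₁ (hBsub t₁ h₁B) hne'; omega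
      · have := hrest t₂ (hBsub t₂ h₂B) hne'; omega
end

section
/- Let n be a natural number with n ≥ 2. The symmetric group of permutations of Fin n is generated by the transposition swapping 0 and 1 together with all transpositions swapping i and i + 2 for indices i with i + 2 < n. -/
/-- For `n ≥ 2`, the symmetric group on `Fin n` is generated by the
transposition `(0 1)` together with all transpositions `(i, i+2)` for
`i + 2 < n`. -/
theorem symmGroup_generated_by_swap01_and_swapsByTwo (n : ℕ) (hn : 2 ≤ n) :
    Subgroup.closure
      ({Equiv.swap (⟨0, by omega⟩ : Fin n) ⟨1, by omega⟩} ∪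
        {σ : Equiv.Perm (Fin n) | ∃ (i : ℕ) (h : i + 2 < n),
          σ = Equiv.swap (⟨i, by omega⟩ : Fin n) ⟨i + 2, h⟩}) = ⊤ := by
  set S : Set (Equiv.Perm (Fin n)) :=
    ({Equiv.swap (⟨0, by omega⟩ : Fin n) ⟨1, by omega⟩} ∪
      {σ : Equiv.Perm (Fin n) | ∃ (i : ℕ) (h : i + 2 < n),
        σ = Equiv.swap (⟨i, by omega⟩ : Fin n) ⟨i + 2, h⟩}) with hS
  have adj : ∀ k (h : k + 1 < n),
      Equiv.swap (⟨k, by omega⟩ : Fin n) ⟨k + 1, h⟩ ∈ Subgroup.closure S := by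
    intro k
    induction k with
    | zero => intro h; exact Subgroup.subset_closure (Or.inl rfl)
    | succ k ih =>
      intro h
      have h2 : k + 2 < n := by omega
      have hs : Equiv.swap (⟨k, by omega⟩ : Fin n) ⟨k + 2, h2⟩ ∈ Subgroup.closure S :=
        Subgroup.subset_closure (Or.inr ⟨k, h2, rfl⟩)
      have hk : Equiv.swap (⟨k, by omega⟩ : Fin n) ⟨k + 1, by omega⟩ ∈ Subgroup.closure S :=
        ih (by omega)
      have key := Equiv.swap_mul_swap_mul_swap
        (x := (⟨k + 1, by omega⟩ : Fin n)) (y := ⟨k, by omega⟩) (z := ⟨k + 2, h2⟩)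
        (by simp [Fin.ext_iff]) (by simp [Fin.ext_iff])
      have : Equiv.swap (⟨k + 2, h2⟩ : Fin n) ⟨k + 1, by omega⟩ ∈ Subgroup.closure S := by
        rw [← key]
        exact mul_mem (mul_mem hs (by rw [Equiv.swap_comm]; exact hk)) hs
      rwa [Equiv.swap_comm] at this
  obtain ⟨m, rfl⟩ : ∃ m, n = m + 1 := ⟨n - 1, by omega⟩
  rw [eq_top_iff]
  intro σ _
  have hσ : σ ∈ Submonoid.closure
      (Set.range fun i : Fin m ↦ Equiv.swap i.castSucc i.succ) := by
    rw [Equiv.Perm.mclosure_swap_castSucc_succ]; trivial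
  refine Submonoid.closure_induction ?_ (one_mem _) (fun _ _ _ _ ha hb ↦ mul_mem ha hb) hσ
  rintro _ ⟨i, rfl⟩
  have hi : (i : ℕ) + 1 < m + 1 := by omega
  have := adj i.val hi
  convert this using 2 <;> simp [Fin.ext_iff]
end
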